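/- Let D be a digraph with arc-weighting w such that every vertex of D is strongly contracting (δ_v < 0 for all v). Let η* be a nonnegative vertex-weighting of D such that η*(N1+(v)) ≤ η*(N2+(v)) for every vertex v. Assume that for every vertex v and every s ∈ N2+(v) there exists u ∈ N1+(v) with u → s and w(us) > 0. Let ε > 0 satisfy ε·η*(y) ≤ w(xy) for every arc x → y with w(xy) > 0, and define a new arc-weighting w* by w*(xy) = w(xy) − ε·η*(y) if w(xy) > 0 and w*(xy) = 0 if w(xy) = 0. Then w* is a nonnegative arc-weighting under which every vertex of D is still strongly contracting. -/

import Mathlib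

/-!
Subtracting `ε·η*(s)` from every positively weighted arc into `s` never increases any
`β_v(s)`, and for `s ∈ N2+(v)` it lowers `β_v(s)` by at least `ε·η*(s)`: there `w(vs) = 0`,
and the arc `u → s` of positive weight shows `β_v(s) ≥ ε·η*(s)`, so the truncation at `0`
does not absorb the decrease. Meanwhile `α_v` drops by at most `ε·η*(N1+(v))`. Hence
`δ*_v ≤ δ_v − ε·(η*(N2+(v)) − η*(N1+(v))) ≤ δ_v < 0`.
-/

open Finset

/-- The first out-neighborhood of `v`: all `u` with `v → u`. -/
def firstNbhd {V : Type*} [Fintype V] (adj : V → V → Prop) [DecidableRel adj] (v : V) :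
    Finset V :=
  Finset.univ.filter (fun u => adj v u)

/-- The second out-neighborhood of `v`: all `u ≠ v` with `¬ v → u` and `v → x → u` for some `x`. -/
def secondNbhd {V : Type*} [Fintype V] [DecidableEq V] (adj : V → V → Prop)
    [DecidableRel adj] (v : V) : Finset V :=
  Finset.univ.filter (fun u => u ≠ v ∧ ¬ adj v u ∧ ∃ x, adj v x ∧ adj x u)

/-- First neighborhood weight `α_v = Σ_{u ∈ N1+(v)} w(vu)`. -/
def alphaW {V : Type*} [Fintype V] (adj : V → V → Prop) [DecidableRel adj]
    (w : V → V → ℝ) (v : V) : ℝ :=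
  ∑ u ∈ firstNbhd adj v, w v u

/-- `β_v(s) = max({0} ∪ {w(us) − w(vs) : v → u and u → s})`. -/
noncomputable def betaS {V : Type*} [Fintype V] (adj : V → V → Prop) [DecidableRel adj]
    (w : V → V → ℝ) (v s : V) : ℝ :=
  (insert (0 : ℝ)
    ((Finset.univ.filter (fun u => adj v u ∧ adj u s)).image (fun u => w u s - w v s))).max'
    (Finset.insert_nonempty _ _)

/-- Second neighborhood weight `β_v = Σ_{s ∈ V} β_v(s)`. -/
noncomputable def betaW {V : Type*} [Fintype V] (adj : V → V → Prop) [DecidableRel adj]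
    (w : V → V → ℝ) (v : V) : ℝ :=
  ∑ s, betaS adj w v s

/-- Neighborhood weight difference `δ_v = β_v − α_v`. -/
noncomputable def deltaW {V : Type*} [Fintype V] (adj : V → V → Prop) [DecidableRel adj]
    (w : V → V → ℝ) (v : V) : ℝ :=
  betaW adj w v - alphaW adj w v

section Perturb

variable {V : Type*} (w : V → V → ℝ) (ε : ℝ) (η : V → ℝ)

noncomputable def perturbWeight (x y : V) : ℝ :=
  if 0 < w x y then w x y - ε * η y else 0

variable {w ε η} {x y : V}

lemma perturbWeight_nonneg (h : 0 < w x y → ε * η y ≤ w x y) :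
    0 ≤ perturbWeight w ε η x y := by
  unfold perturbWeight
  split_ifs with hw
  · linarith [h hw]
  · exact le_rfl

lemma perturbWeight_of_nonpos (h : w x y ≤ 0) : perturbWeight w ε η x y = 0 :=
  if_neg h.not_gt

lemma sub_le_perturbWeight (h : 0 ≤ ε * η y) :
    w x y - ε * η y ≤ perturbWeight w ε η x y := by
  unfold perturbWeight
  split_ifs with hw
  · exact le_rfl
  · linarith [not_lt.1 hw]

lemma perturbWeight_le_max : perturbWeight w ε η x y ≤ max 0 (w x y - ε * η y) := by
  unfold perturbWeight
  split_ifs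
  · exact le_max_right _ _
  · exact le_max_left _ _

lemma perturbWeight_sub_perturbWeight_le_max {a b s : V}
    (hsmall : 0 < w b s → ε * η s ≤ w b s) (h : 0 ≤ ε * η s) :
    perturbWeight w ε η a s - perturbWeight w ε η b s ≤ max 0 (w a s - w b s) := by
  unfold perturbWeight
  split_ifs with ha hb hb
  · exact le_max_of_le_right (by linarith)
  · exact le_max_of_le_right (by linarith [not_lt.1 hb])
  · exact le_max_of_le_left (by linarith [hsmall hb])
  · exact le_max_of_le_left (sub_self 0).le

end Perturb

section Beta

variable {V : Type*} [Fintype V] {adj : V → V → Prop} [DecidableRel adj] {w : V → V → ℝ}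
  {v s : V}

lemma betaS_nonneg : 0 ≤ betaS adj w v s :=
  le_max' _ 0 (mem_insert_self _ _)

lemma sub_le_betaS {u : V} (hvu : adj v u) (hus : adj u s) : w u s - w v s ≤ betaS adj w v s :=
  le_max' _ _ <| mem_insert_of_mem <| mem_image_of_mem (fun u => w u s - w v s)
    (s := univ.filter fun u => adj v u ∧ adj u s) (mem_filter.2 ⟨mem_univ u, hvu, hus⟩)

lemma betaS_le {c : ℝ} (hc : 0 ≤ c) (h : ∀ u, adj v u → adj u s → w u s - w v s ≤ c) :
    betaS adj w v s ≤ c := by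
  refine max'_le _ _ _ fun y hy => ?_
  rcases mem_insert.1 hy with rfl | hy
  · exact hc
  · obtain ⟨u, hu, rfl⟩ := mem_image.1 hy
    exact h u (mem_filter.1 hu).2.1 (mem_filter.1 hu).2.2

variable {ε : ℝ} {η : V → ℝ}

lemma betaS_perturbWeight_le (hv : 0 < w v s → ε * η s ≤ w v s) (h : 0 ≤ ε * η s) :
    betaS adj (perturbWeight w ε η) v s ≤ betaS adj w v s :=
  betaS_le betaS_nonneg fun _ hvu hus =>
    (perturbWeight_sub_perturbWeight_le_max hv h).trans (max_le betaS_nonneg (sub_le_betaS hvu hus))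

lemma betaS_perturbWeight_le_sub (hvs : w v s = 0)
    (hwit : ∃ u, adj v u ∧ adj u s ∧ ε * η s ≤ w u s) :
    betaS adj (perturbWeight w ε η) v s ≤ betaS adj w v s - ε * η s := by
  have hsub : ∀ u, adj v u → adj u s → w u s ≤ betaS adj w v s := fun u hvu hus => by
    simpa only [hvs, sub_zero] using sub_le_betaS (w := w) hvu hus
  obtain ⟨u₀, hvu₀, hu₀s, hu₀⟩ := hwit
  have hβ : ε * η s ≤ betaS adj w v s := hu₀.trans (hsub u₀ hvu₀ hu₀s)
  refine betaS_le (by linarith) fun u hvu hus => ?_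
  rw [perturbWeight_of_nonpos hvs.le, sub_zero]
  exact perturbWeight_le_max.trans (max_le (by linarith) (by linarith [hsub u hvu hus]))

lemma betaW_perturbWeight_le_sub_sum [DecidableEq V] (T : Finset V)
    (hsmall : ∀ y, 0 < w v y → ε * η y ≤ w v y) (hεη : ∀ y, 0 ≤ ε * η y)
    (hT : ∀ s ∈ T, w v s = 0 ∧ ∃ u, adj v u ∧ adj u s ∧ ε * η s ≤ w u s) :
    betaW adj (perturbWeight w ε η) v ≤ betaW adj w v - ε * ∑ s ∈ T, η s := by
  unfold betaW
  rw [← sum_compl_add_sum T, ← sum_compl_add_sum T (betaS adj w v), mul_sum]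
  have hout := sum_le_sum fun s (_ : s ∈ Tᶜ) =>
    betaS_perturbWeight_le (adj := adj) (hsmall s) (hεη s)
  have hin := sum_le_sum fun s hs => betaS_perturbWeight_le_sub (adj := adj) (hT s hs).1 (hT s hs).2
  rw [sum_sub_distrib] at hin
  linarith

lemma alphaW_sub_le_alphaW_perturbWeight (hεη : ∀ y, 0 ≤ ε * η y) :
    alphaW adj w v - ε * ∑ s ∈ firstNbhd adj v, η s ≤
      alphaW adj (perturbWeight w ε η) v := by
  unfold alphaW
  rw [mul_sum, ← sum_sub_distrib]
  exact sum_le_sum fun u _ => sub_le_perturbWeight (hεη u)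

end Beta

theorem perturbed_weighting_still_contracting_general
    {V : Type*} [Fintype V] [DecidableEq V]
    (adj : V → V → Prop) [DecidableRel adj]
    (w : V → V → ℝ)
    (hw_arc : ∀ a b, ¬ adj a b → w a b = 0)
    (hcontr : ∀ v : V, deltaW adj w v < 0)
    (η : V → ℝ) (hη_nonneg : ∀ v, 0 ≤ η v)
    (hη_exp : ∀ v : V, ∑ s ∈ firstNbhd adj v, η s ≤ ∑ s ∈ secondNbhd adj v, η s)
    (hfull : ∀ v : V, ∀ s ∈ secondNbhd adj v,
        ∃ u ∈ firstNbhd adj v, adj u s ∧ 0 < w u s)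
    (ε : ℝ) (hε : 0 < ε)
    (hε_small : ∀ x y, adj x y → 0 < w x y → ε * η y ≤ w x y)
    (w' : V → V → ℝ)
    (hw' : ∀ x y, w' x y = if 0 < w x y then w x y - ε * η y else 0) :
    (∀ a b, 0 ≤ w' a b) ∧ (∀ a b, ¬ adj a b → w' a b = 0) ∧
      ∀ v : V, deltaW adj w' v < 0 := by
  obtain rfl : w' = perturbWeight w ε η := funext fun x => funext (hw' x)
  have hsmall : ∀ x y, 0 < w x y → ε * η y ≤ w x y := fun x y hxy =>
    hε_small x y (by_contra fun h => hxy.ne' (hw_arc x y h)) hxy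
  have hεη : ∀ y, 0 ≤ ε * η y := fun y => mul_nonneg hε.le (hη_nonneg y)
  refine ⟨fun a b => perturbWeight_nonneg (hsmall a b),
    fun a b h => perturbWeight_of_nonpos (hw_arc a b h).le, fun v => ?_⟩
  have hβ := betaW_perturbWeight_le_sub_sum (secondNbhd adj v) (hsmall v) hεη fun s hs => by
    obtain ⟨u, hu, hus, hpos⟩ := hfull v s hs
    exact ⟨hw_arc v s (mem_filter.1 hs).2.2.1, u, (mem_filter.1 hu).2, hus, hsmall u s hpos⟩
  have hα := alphaW_sub_le_alphaW_perturbWeight (adj := adj) (w := w) (v := v) hεη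
  have hδ := hcontr v
  unfold deltaW at hδ ⊢
  linarith [mul_le_mul_of_nonneg_left (hη_exp v) hε.le]

/-- Let `D` be an arc-weighted digraph in which every vertex is strongly contracting
(`δ_v < 0` for all `v`), and let `η*` be a nonnegative vertex-weighting with
`η*(N1+(v)) ≤ η*(N2+(v))` for all `v`.  Assume that for every vertex `v` and every
`s ∈ N2+(v)` there is a `u ∈ N1+(v)` with `u → s` and `w(us) > 0`.  If `ε > 0` satisfies
`ε·η*(y) ≤ w(xy)` for every arc `x → y` of positive weight, then the new arc-weighting
`w*(xy) = w(xy) − ε·η*(y)` on positive-weight arcs (and `0` elsewhere) is a nonnegative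
arc-weighting under which every vertex is still strongly contracting. -/
theorem perturbed_weighting_still_contracting
    {V : Type*} [Fintype V] [DecidableEq V]
    (adj : V → V → Prop) [DecidableRel adj]
    (hirr : ∀ a, ¬ adj a a)
    (hasym : ∀ a b, adj a b → ¬ adj b a)
    (w : V → V → ℝ)
    (hw_nonneg : ∀ a b, 0 ≤ w a b)
    (hw_arc : ∀ a b, ¬ adj a b → w a b = 0)
    (hcontr : ∀ v : V, deltaW adj w v < 0)
    (η : V → ℝ) (hη_nonneg : ∀ v, 0 ≤ η v)
    (hη_exp : ∀ v : V, ∑ s ∈ firstNbhd adj v, η s ≤ ∑ s ∈ secondNbhd adj v, η s)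
    (hfull : ∀ v : V, ∀ s ∈ secondNbhd adj v,
        ∃ u ∈ firstNbhd adj v, adj u s ∧ 0 < w u s)
    (ε : ℝ) (hε : 0 < ε)
    (hε_small : ∀ x y, adj x y → 0 < w x y → ε * η y ≤ w x y)
    (w' : V → V → ℝ)
    (hw' : ∀ x y, w' x y = if 0 < w x y then w x y - ε * η y else 0) :
    (∀ a b, 0 ≤ w' a b) ∧ (∀ a b, ¬ adj a b → w' a b = 0) ∧
      ∀ v : V, deltaW adj w' v < 0 :=
  perturbed_weighting_still_contracting_general adj w hw_arc hcontr η hη_nonneg hη_exp hfull ε hε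
    hε_small w' hw'
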